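/- For 1 ≤ m ≤ n−1 and t = q − q^{−1}, the following identity of H_m-valued rational functions in a variable u holds: ((u − q² y_m)(u − q^{−2} y_m)/(u − y_m)²) · Tr_{m+1}((u − y_{m+1})^{−1}) = Tr_m((u − y_m)^{−1}) + t(1 − Qt) y_m/(u − y_m)², where the conditional expectations are extended ℂ(q)(u)-linearly to rational functions with values in the Hecke algebras (for m = 1, Tr_1((u − y_1)^{−1}) = Q/(u − 1)). -/

import Mathlib

noncomputable section

open scoped Classical

namespace HeckePaper

abbrev F : Type := RatFunc ℂ
def q : F := RatFunc.X

inductive Rel : FreeAlgebra F ℕ → FreeAlgebra F ℕ → Prop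
  | braid (i : ℕ) : Rel (FreeAlgebra.ι F i * FreeAlgebra.ι F (i + 1) * FreeAlgebra.ι F i)
      (FreeAlgebra.ι F (i + 1) * FreeAlgebra.ι F i * FreeAlgebra.ι F (i + 1))
  | comm (i j : ℕ) (h : i + 1 < j) :
      Rel (FreeAlgebra.ι F i * FreeAlgebra.ι F j) (FreeAlgebra.ι F j * FreeAlgebra.ι F i)
  | quad (i : ℕ) :
      Rel (FreeAlgebra.ι F i * FreeAlgebra.ι F i) (1 + (q - q⁻¹) • FreeAlgebra.ι F i)

abbrev H : Type := RingQuot Rel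
def T (i : ℕ) : H := RingQuot.mkAlgHom F Rel (FreeAlgebra.ι F i)
def cc : F →+* H := algebraMap F H
def Tinv (i : ℕ) : H := T i - (q - q⁻¹) • 1

def y : ℕ → H
  | 0 => 1
  | 1 => 1
  | (k + 2) => T (k + 1) * y (k + 1) * T (k + 1)

def Tdesc : ℕ → H
  | 0 => 1
  | (k + 1) => T (k + 1) * Tdesc k


def Tasc : ℕ → H
  | 0 => 1
  | (k + 1) => Tasc k * T (k + 1)

/-- The reversed-order product `(T_1 ⋯ T_{k-2} T_{k-1})(T_1 ⋯ T_{k-2}) ⋯ (T_1 T_2) T_1`. -/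
def Tw' : ℕ → H
  | 0 => 1
  | (k + 1) => Tasc k * Tw' k

def Tw : ℕ → H
  | 0 => 1
  | (k + 1) => Tw k * Tdesc k

def TT (i : ℕ) (x z : F) : H := (z - x)⁻¹ • (z • T i - x • Tinv i)

/-! ### Tableaux -/

/-- The q-content `q^{2(j-i)}` of a cell `(i,j)` (rows and columns indexed from 0). -/
def qcont (c : ℕ × ℕ) : F := q ^ (2 * ((c.2 : ℤ) - (c.1 : ℤ)))

/-- A standard tableau with `n` cells: `entry k` is the cell (row, column, 0-indexed)
containing the number `k`, for `1 ≤ k ≤ n`.  The requirement that the set of cells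
occupied by `1, …, k` is a Young diagram for each `k` is equivalent to the entries
increasing along rows and down columns. -/
structure StandardTableau (n : ℕ) where
  entry : ℕ → ℕ × ℕ
  injOn : Set.InjOn entry (Set.Icc 1 n)
  lower : ∀ k, k ≤ n → IsLowerSet {c : ℕ × ℕ | ∃ j, 1 ≤ j ∧ j ≤ k ∧ entry j = c}

/-- `sig T k` is the q-content `σ_k` of the cell of `T` containing `k`. -/
def sig {n : ℕ} (T : StandardTableau n) (k : ℕ) : F := qcont (T.entry k)

/-- The standard tableau obtained by removing the cell containing the largest entry. -/
def restrict {n : ℕ} (T : StandardTableau n) : StandardTableau (n - 1) where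
  entry := T.entry
  injOn := T.injOn.mono (Set.Icc_subset_Icc_right (Nat.sub_le n 1))
  lower := fun k hk => T.lower k (hk.trans (Nat.sub_le n 1))

/-- The shape of a standard tableau, as a finite set of cells. -/
def shapeF {n : ℕ} (T : StandardTableau n) : Finset (ℕ × ℕ) := (Finset.Icc 1 n).image T.entry

/-- The shape of a standard tableau, as a Young diagram. -/
def shapeD {n : ℕ} (T : StandardTableau n) : YoungDiagram where
  cells := shapeF T
  isLowerSet := by
    have h := T.lower n le_rfl
    have he : (↑(shapeF T) : Set (ℕ × ℕ)) = {c : ℕ × ℕ | ∃ j, 1 ≤ j ∧ j ≤ n ∧ T.entry j = c} := by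
      ext c
      simp only [shapeF, Finset.coe_image, Set.mem_image, Finset.mem_coe, Finset.mem_Icc,
        Set.mem_setOf_eq]
      constructor
      · rintro ⟨j, ⟨h1, h2⟩, rfl⟩; exact ⟨j, h1, h2, rfl⟩
      · rintro ⟨j, h1, h2, rfl⟩; exact ⟨j, ⟨h1, h2⟩, rfl⟩
    rw [he]; exact h

/-- A cell is addable to a diagram if adjoining it yields again a diagram. -/
def addable (μ : Finset (ℕ × ℕ)) (c : ℕ × ℕ) : Prop :=
  c ∉ μ ∧ IsLowerSet ((↑μ ∪ {c}) : Set (ℕ × ℕ))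

/-- The (finite) set of addable cells of a diagram. -/
def addables (μ : Finset (ℕ × ℕ)) : Finset (ℕ × ℕ) :=
  (Finset.range (μ.card + 1) ×ˢ Finset.range (μ.card + 1)).filter (addable μ)

lemma commute_lin (m : ℕ) (a b c d : F) :
    Commute (cc a * (y m - cc b)) (cc c * (y m - cc d)) := by
  have h1 : ∀ (r : F) (x : H), Commute (cc r) x := fun r x => Algebra.commute_algebraMap_left r x
  have hyd : Commute (y m) (y m - cc d) := (Commute.refl (y m)).sub_right (h1 d (y m)).symm
  have h2 : Commute (y m - cc b) (y m - cc d) := hyd.sub_left (h1 b (y m - cc d))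
  exact (h1 a _).mul_left (((h1 c _).symm).mul_right h2)

/-- The primitive idempotents `E_T` of the Hecke algebras, defined inductively:
`E_T = E_U ∏_{ρ} (y_n - ρ)/(σ_n - ρ)`, the product over the q-contents `ρ` of the
addable cells of the shape of `U` other than the cell of `n`. -/
def Eelt : (n : ℕ) → StandardTableau n → H
  | 0, _ => 1
  | (n + 1), T =>
      Eelt n (restrict T) *
        Finset.noncommProd ((addables (shapeF (restrict T))).erase (T.entry (n + 1)))
          (fun c => cc ((qcont (T.entry (n + 1)) - qcont c)⁻¹) * (y (n + 1) - cc (qcont c)))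
          (by intro a _ b _ _; exact commute_lin (n + 1) _ _ _ _)

/-! ### Hooks and the normalization factor `f(λ)` -/

/-- The quantum integer `[m]_q = (q^m - q^{-m})/(q - q^{-1})`. -/
def qnum (m : ℕ) : F := (q ^ (m : ℤ) - q ^ (-(m : ℤ))) / (q - q⁻¹)

/-- The hook length of the cell `c` of `μ` (cells 0-indexed). -/
def hook (μ : YoungDiagram) (c : ℕ × ℕ) : ℕ := μ.rowLen c.1 + μ.colLen c.2 - c.1 - c.2 - 1

/-- The normalization factor `f(λ) = ∏_{α ∈ λ} q^{c_α} / [h_α]_q`. -/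
def fla (μ : YoungDiagram) : F := ∏ c ∈ μ.cells, (q ^ ((c.2 : ℤ) - (c.1 : ℤ)) / qnum (hook μ c))

/-! ### The function Ψ -/

/-- The inner factor `T_k(u_1,u_{k+1}) T_{k-1}(u_2,u_{k+1}) ⋯ T_1(u_k,u_{k+1})`. -/
def innerProd (k : ℕ) (u : ℕ → F) : H :=
  ((List.range k).map (fun i => TT (k - i) (u (i + 1)) (u (k + 1)))).prod

/-- The function `Ψ(u_1,…,u_n)`. -/
def PsiFun (n : ℕ) (u : ℕ → F) : H :=
  ((List.range (n - 1)).map (fun j => innerProd (j + 1) u)).prod * Ring.inverse (Tw n)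

/-! ### Conditional expectations and the Ocneanu–Markov trace -/

/-- The subalgebra `H_m ⊆ H` generated by `T_1, …, T_{m-1}`. -/
def Hsub (m : ℕ) : Subalgebra F H := Algebra.adjoin F (T '' {i | 1 ≤ i ∧ i + 1 ≤ m})

/-- The defining properties of the family of conditional expectations
`Tr_m : H_m → H_{m-1}` with parameter `Q`; `tr m` represents `Tr_m` (defined on all
of `H`, but its characterizing properties concern the subalgebras `H_m`). -/
structure IsCondExp (Q : F) (tr : ℕ → H →ₗ[F] H) : Prop where
  mem : ∀ m, 1 ≤ m → ∀ z ∈ Hsub m, tr m z ∈ Hsub (m - 1)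
  bimod : ∀ m, 1 ≤ m → ∀ X ∈ Hsub (m - 1), ∀ Y ∈ Hsub (m - 1), ∀ Z ∈ Hsub m,
      tr m (X * Z * Y) = X * tr m Z * Y
  scalar : ∀ m, 1 ≤ m → ∀ X ∈ Hsub (m - 1), tr m X = Q • X
  conj : ∀ m, 1 ≤ m → ∀ X ∈ Hsub m, tr (m + 1) (T m * X * Tinv m) = tr m X
  conj' : ∀ m, 1 ≤ m → ∀ X ∈ Hsub m, tr (m + 1) (Tinv m * X * T m) = tr m X
  genOne : ∀ m, 1 ≤ m → tr (m + 1) (T m) = 1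
  markov : ∀ m, 1 ≤ m → ∀ Z ∈ Hsub (m + 1),
      tr m (tr (m + 1) (T m * Z)) = tr m (tr (m + 1) (Z * T m))

/-- `trComp tr n = Tr_1 ∘ Tr_2 ∘ ⋯ ∘ Tr_n`, the Ocneanu–Markov trace `Tr^{(n)}`
(with values in the scalars `ℂ(q)·1 ⊆ H`). -/
def trComp (tr : ℕ → H →ₗ[F] H) : ℕ → H → H
  | 0 => id
  | (m + 1) => fun x => trComp tr m (tr (m + 1) x)

/-!
Write `t = q - q⁻¹`, `R = (u - y_m)⁻¹` and `S = (u - y_{m+1})⁻¹`. Since `y_{m+1} = T_m y_m T_m`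
commutes with `y_m` (indeed `y_{m+1}` centralizes `H_m`), a computation using only
`T_m² = 1 + t T_m` gives
`((u - q² y_m)(u - q⁻² y_m)/(u - y_m)²) S = T_m⁻¹ R T_m⁻¹ + t u R T_m R - t² u R²`,
and the conditional expectation `Tr_{m+1}` of the right-hand side is read off from the axioms:
`Tr_{m+1}(T_m⁻¹ R T_m⁻¹) = Tr_m(R) - t(R - tQR)`, `Tr_{m+1}(R T_m R) = R²`, `Tr_{m+1}(R²) = Q R²`.
These axioms apply because the resolvents lie in `H_m` and `H_{m+1}`: each `H_k` is
finite-dimensional, by `H_{k+1} ⊆ H_k + H_k T_k H_k`, and in a finite-dimensional algebra the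
inverse of an element is a polynomial in it.
-/
end HeckePaper

section InverseMem

variable {R A : Type*} [CommRing R] [IsArtinianRing R] [Ring A] [Algebra R A]

theorem Ring.inverse_mem_adjoin_singleton_of_isIntegral {x : A} (hi : IsIntegral R x)
    (hu : IsUnit x) : Ring.inverse x ∈ Algebra.adjoin R {x} := by
  let B := Algebra.adjoin R {x}
  have : Module.Finite R B := Algebra.finite_adjoin_simple_of_isIntegral hi
  have : IsArtinianRing B := isArtinian_of_tower R inferInstance
  have hx : (⟨x, Algebra.self_mem_adjoin_singleton R x⟩ : B) ∈ nonZeroDivisors B :=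
    comap_nonZeroDivisors_le_of_injective (f := B.subtype) Subtype.val_injective
      hu.mem_nonZeroDivisors
  obtain ⟨v, hv⟩ := IsArtinianRing.isUnit_of_mem_nonZeroDivisors hx
  have hxv : x = ((Units.map B.subtype.toMonoidHom v : Aˣ) : A) := by simp [hv]; rfl
  have hinv : Ring.inverse x = ((Units.map B.subtype.toMonoidHom v)⁻¹ : Aˣ) := by
    rw [← Ring.inverse_unit, ← hxv]
  rw [hinv]
  exact (v⁻¹ : Bˣ).val.2

theorem Subalgebra.inverse_mem_of_isIntegral (S : Subalgebra R A) {x : A} (hx : x ∈ S)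
    (hi : IsIntegral R x) (hu : IsUnit x) : Ring.inverse x ∈ S :=
  Algebra.adjoin_le (Set.singleton_subset_iff.mpr hx)
    (Ring.inverse_mem_adjoin_singleton_of_isIntegral hi hu)

end InverseMem

section SubmoduleSemiring

open Submodule

variable {R A : Type*} [CommSemiring R] [Semiring A] [Algebra R A]

theorem Algebra.toSubmodule_adjoin_le_of_span_mul_le {s : Set A} {N : Submodule R A}
    (h1 : (1 : A) ∈ N) (hs : ∀ g ∈ s, span R {g} * N ≤ N) :
    Subalgebra.toSubmodule (Algebra.adjoin R s) ≤ N := by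
  intro x hx
  suffices ∀ n ∈ N, x * n ∈ N by simpa using this 1 h1
  induction hx using Algebra.adjoin_induction with
  | mem g hg => exact fun n hn => hs g hg (mul_mem_mul (mem_span_singleton_self g) hn)
  | algebraMap r => exact fun n hn => (Algebra.smul_def r n) ▸ N.smul_mem r hn
  | add a b _ _ ha hb => exact fun n hn => (add_mul a b n).symm ▸ add_mem (ha n hn) (hb n hn)
  | mul a b _ _ ha hb => exact fun n hn => (mul_assoc a b n).symm ▸ ha _ (hb n hn)

variable (M : Subalgebra R A) (P : Submodule R A)

theorem Subalgebra.toSubmodule_mul_sup_le :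
    toSubmodule M * (toSubmodule M ⊔ toSubmodule M * P * toSubmodule M)
      ≤ toSubmodule M ⊔ toSubmodule M * P * toSubmodule M := by
  rw [Submodule.mul_sup, ← mul_assoc, ← mul_assoc, (Subalgebra.isIdempotentElem_toSubmodule M).eq]

theorem Subalgebra.sup_mul_toSubmodule_le :
    (toSubmodule M ⊔ toSubmodule M * P * toSubmodule M) * toSubmodule M
      ≤ toSubmodule M ⊔ toSubmodule M * P * toSubmodule M := by
  rw [Submodule.sup_mul, mul_assoc _ (toSubmodule M),
    (Subalgebra.isIdempotentElem_toSubmodule M).eq]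

theorem Subalgebra.mul_sup_le_of_mul_mul_le
    (h : P * toSubmodule M * P ≤ toSubmodule M ⊔ toSubmodule M * P * toSubmodule M) :
    P * (toSubmodule M ⊔ toSubmodule M * P * toSubmodule M)
      ≤ toSubmodule M ⊔ toSubmodule M * P * toSubmodule M := by
  have h1 : (1 : Submodule R A) ≤ toSubmodule M := Submodule.one_le.mpr M.one_mem
  rw [Submodule.mul_sup]
  refine sup_le ?_ ?_
  · calc P * toSubmodule M = 1 * P * toSubmodule M := by rw [one_mul]
      _ ≤ toSubmodule M * P * toSubmodule M := by gcongr
      _ ≤ _ := le_sup_right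
  · calc P * (toSubmodule M * P * toSubmodule M) = P * toSubmodule M * P * toSubmodule M := by
          simp only [mul_assoc]
      _ ≤ (toSubmodule M ⊔ toSubmodule M * P * toSubmodule M) * toSubmodule M := by gcongr
      _ ≤ _ := Subalgebra.sup_mul_toSubmodule_le M P

end SubmoduleSemiring

namespace HeckePaper

open Submodule

theorem T_mul_self (i : ℕ) : T i * T i = 1 + (q - q⁻¹) • T i := by
  simpa [T] using RingQuot.mkAlgHom_rel F (Rel.quad i)

theorem T_braid (i : ℕ) : T i * T (i + 1) * T i = T (i + 1) * T i * T (i + 1) := by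
  simpa [T] using RingQuot.mkAlgHom_rel F (Rel.braid i)

theorem commute_T_T {i j : ℕ} (h : i + 1 < j) : Commute (T i) (T j) := by
  simpa [T, Commute, SemiconjBy] using RingQuot.mkAlgHom_rel F (Rel.comm i j h)

theorem T_mem_Hsub {i m : ℕ} (h1 : 1 ≤ i) (h2 : i < m) : T i ∈ Hsub m :=
  Algebra.subset_adjoin ⟨i, ⟨h1, h2⟩, rfl⟩

theorem Hsub_eq_bot {m : ℕ} (hm : m ≤ 1) : Hsub m = ⊥ := by
  have : {i | 1 ≤ i ∧ i + 1 ≤ m} = ∅ :=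
    Set.eq_empty_of_forall_notMem fun _ ⟨h1, h2⟩ ↦ by omega
  rw [Hsub, this, Set.image_empty, Algebra.adjoin_empty]

theorem Hsub_mono {k m : ℕ} (h : k ≤ m) : Hsub k ≤ Hsub m :=
  Algebra.adjoin_mono (Set.image_mono fun _ hi ↦ ⟨hi.1, hi.2.trans h⟩)

theorem Hsub_le_centralizer_T {k j : ℕ} (h : k < j) :
    Hsub k ≤ Subalgebra.centralizer F {T j} := by
  rw [Hsub, Algebra.adjoin_le_iff]
  rintro _ ⟨i, ⟨-, hi⟩, rfl⟩ _ rfl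
  exact (commute_T_T (by omega)).symm.eq

theorem y_mem_Hsub : ∀ k, y k ∈ Hsub k
  | 0 | 1 => one_mem _
  | k + 2 => by
    have hT : T (k + 1) ∈ Hsub (k + 2) := T_mem_Hsub (by omega) (by omega)
    exact mul_mem (mul_mem hT (Hsub_mono (by omega) (y_mem_Hsub (k + 1)))) hT

theorem y_succ {m : ℕ} (hm : 1 ≤ m) : y (m + 1) = T m * y m * T m := by
  obtain ⟨k, rfl⟩ : ∃ k, m = k + 1 := ⟨m - 1, by omega⟩
  rfl

theorem commute_y_succ_T : ∀ {m i : ℕ}, 1 ≤ i → i < m → Commute (y (m + 1)) (T i)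
  | k + 1, i, hi, him => by
    rw [y_succ (by omega)]
    rcases Nat.lt_succ_iff_lt_or_eq.mp him with hik | rfl
    · have hT : Commute (T (k + 1)) (T i) := (commute_T_T (by omega)).symm
      exact (hT.mul_left (commute_y_succ_T hi hik)).mul_left hT
    · set a := T i
      set b := T (i + 1)
      have hz : b * y i = y i * b := Hsub_le_centralizer_T (Nat.lt_succ_self i) (y_mem_Hsub i) b rfl
      have hbraid : a * (b * a) = b * (a * b) := by simpa only [mul_assoc] using T_braid i
      have hbab : ∀ x, a * (b * (a * x)) = b * (a * (b * x)) := fun x ↦ by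
        simp only [← mul_assoc] at hbraid ⊢
        rw [hbraid]
      rw [y_succ hi]
      change (b * (a * y i * a) * b) * a = a * (b * (a * y i * a) * b)
      simp only [mul_assoc]
      rw [hbab, ← mul_assoc b (y i), hz, mul_assoc, hbraid]

theorem commute_y_y_succ (m : ℕ) : Commute (y m) (y (m + 1)) := by
  suffices Hsub m ≤ Subalgebra.centralizer F {y (m + 1)} from (this (y_mem_Hsub m) _ rfl).symm
  rw [Hsub, Algebra.adjoin_le_iff]
  rintro _ ⟨i, ⟨hi, him⟩, rfl⟩ _ rfl
  exact commute_y_succ_T hi (by omega)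

local notation "𝓜" k:max => Subalgebra.toSubmodule (Hsub k)
local notation "𝓣" k:max => Submodule.span F {T k}

theorem span_T_mul_span_T_le (i : ℕ) : 𝓣 i * 𝓣 i ≤ 1 ⊔ 𝓣 i := by
  rw [span_mul_span, Set.singleton_mul_singleton, span_le, Set.singleton_subset_iff, T_mul_self]
  exact add_mem (mem_sup_left (one_le.mp le_rfl))
    (mem_sup_right (smul_mem _ _ (mem_span_singleton_self _)))

theorem span_T_braid (i : ℕ) : 𝓣 i * 𝓣 (i + 1) * 𝓣 i = 𝓣 (i + 1) * 𝓣 i * 𝓣 (i + 1) := by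
  simp only [span_mul_span, Set.singleton_mul_singleton, T_braid]

theorem span_T_mul_Hsub_comm {k j : ℕ} (h : k < j) : 𝓣 j * 𝓜 k = 𝓜 k * 𝓣 j :=
  mul_comm_of_commute fun _ ha b hb ↦ by
    obtain ⟨c, rfl⟩ := mem_span_singleton.mp ha
    exact Commute.smul_left (Hsub_le_centralizer_T h hb (T j) rfl) c

theorem span_T_mul_Hsub_mul_span_T_le {k j : ℕ} (h : k < j) :
    𝓣 j * 𝓜 k * 𝓣 j ≤ 𝓜 k ⊔ 𝓜 k * 𝓣 j :=
  calc 𝓣 j * 𝓜 k * 𝓣 j = 𝓜 k * (𝓣 j * 𝓣 j) := by rw [span_T_mul_Hsub_comm h, mul_assoc]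
    _ ≤ 𝓜 k * (1 ⊔ 𝓣 j) := by gcongr; exact span_T_mul_span_T_le j
    _ = 𝓜 k ⊔ 𝓜 k * 𝓣 j := by rw [Submodule.mul_sup, mul_one]

theorem Hsub_succ_le_of {k : ℕ} (h : 𝓣 k * 𝓜 k * 𝓣 k ≤ 𝓜 k ⊔ 𝓜 k * 𝓣 k * 𝓜 k) :
    𝓜 (k + 1) ≤ 𝓜 k ⊔ 𝓜 k * 𝓣 k * 𝓜 k := by
  refine Algebra.toSubmodule_adjoin_le_of_span_mul_le (mem_sup_left (one_mem (Hsub k))) ?_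
  rintro _ ⟨i, ⟨hi, hik⟩, rfl⟩
  rcases Nat.lt_succ_iff_lt_or_eq.mp hik with hik | rfl
  · calc 𝓣 i * (𝓜 k ⊔ 𝓜 k * 𝓣 k * 𝓜 k) ≤ 𝓜 k * (𝓜 k ⊔ 𝓜 k * 𝓣 k * 𝓜 k) := by
          gcongr
          exact span_le.mpr (Set.singleton_subset_iff.mpr (T_mem_Hsub hi hik))
      _ ≤ _ := Subalgebra.toSubmodule_mul_sup_le _ _
  · exact Subalgebra.mul_sup_le_of_mul_mul_le _ _ h

theorem Hsub_succ_succ_le : ∀ j : ℕ,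
    𝓜 (j + 2) ≤ 𝓜 (j + 1) ⊔ 𝓜 (j + 1) * 𝓣 (j + 1) * 𝓜 (j + 1)
  | 0 => Hsub_succ_le_of <| by
    rw [Hsub_eq_bot le_rfl, Algebra.toSubmodule_bot, mul_one, mul_one, one_mul]
    exact span_T_mul_span_T_le 1
  | j + 1 => Hsub_succ_le_of <| by
    have hM : 𝓜 (j + 2) ≤ 𝓜 (j + 1) ⊔ 𝓜 (j + 1) * 𝓣 (j + 1) * 𝓜 (j + 1) :=
      Hsub_succ_succ_le j
    have hM' : 𝓜 (j + 1) ≤ 𝓜 (j + 2) := Hsub_mono (by omega)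
    have hs : 𝓣 (j + 1) ≤ 𝓜 (j + 2) :=
      span_le.mpr (Set.singleton_subset_iff.mpr (T_mem_Hsub (by omega) (by omega)))
    have hcomm : 𝓣 (j + 2) * 𝓜 (j + 1) = 𝓜 (j + 1) * 𝓣 (j + 2) :=
      span_T_mul_Hsub_comm (by omega)
    have hidem := (Subalgebra.isIdempotentElem_toSubmodule (Hsub (j + 2))).eq
    have hone : (1 : Submodule F H) ≤ 𝓜 (j + 2) := Submodule.one_le.mpr (Hsub (j + 2)).one_mem
    have hbraid : 𝓣 (j + 2) * (𝓜 (j + 1) * 𝓣 (j + 1) * 𝓜 (j + 1)) * 𝓣 (j + 2)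
        = 𝓜 (j + 1) * 𝓣 (j + 1) * 𝓣 (j + 2) * (𝓣 (j + 1) * 𝓜 (j + 1)) := by
      calc _ = (𝓣 (j + 2) * 𝓜 (j + 1)) * 𝓣 (j + 1) * (𝓜 (j + 1) * 𝓣 (j + 2)) := by
            simp only [mul_assoc]
        _ = 𝓜 (j + 1) * (𝓣 (j + 2) * 𝓣 (j + 1) * 𝓣 (j + 2)) * 𝓜 (j + 1) := by
            rw [hcomm]; nth_rw 2 [← hcomm]; simp only [mul_assoc]
        _ = _ := by rw [← span_T_braid]; simp only [mul_assoc]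
    calc 𝓣 (j + 2) * 𝓜 (j + 2) * 𝓣 (j + 2)
        ≤ 𝓣 (j + 2) * (𝓜 (j + 1) ⊔ 𝓜 (j + 1) * 𝓣 (j + 1) * 𝓜 (j + 1)) * 𝓣 (j + 2) := by
          gcongr
      _ = 𝓣 (j + 2) * 𝓜 (j + 1) * 𝓣 (j + 2)
          ⊔ 𝓜 (j + 1) * 𝓣 (j + 1) * 𝓣 (j + 2) * (𝓣 (j + 1) * 𝓜 (j + 1)) := by
          rw [Submodule.mul_sup, Submodule.sup_mul, hbraid]
      _ ≤ 𝓜 (j + 1) ⊔ 𝓜 (j + 1) * 𝓣 (j + 2) * 1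
          ⊔ 𝓜 (j + 2) * 𝓜 (j + 2) * 𝓣 (j + 2) * (𝓜 (j + 2) * 𝓜 (j + 2)) := by
          rw [mul_one]
          gcongr
          exact span_T_mul_Hsub_mul_span_T_le (by omega)
      _ ≤ 𝓜 (j + 2) ⊔ 𝓜 (j + 2) * 𝓣 (j + 2) * 𝓜 (j + 2) := by
          rw [hidem, sup_assoc]
          exact sup_le (hM'.trans le_sup_left)
            (sup_le (le_sup_of_le_right (by gcongr)) le_sup_right)

theorem Hsub_fg : ∀ m : ℕ, (𝓜 m).FG
  | 0 | 1 => by rw [Hsub_eq_bot (by omega)]; exact Subalgebra.fg_bot_toSubmodule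
  | j + 2 =>
    have hfg := Hsub_fg (j + 1)
    (hfg.sup ((hfg.mul (fg_span_singleton _)).mul hfg)).of_le (Hsub_succ_succ_le j)

theorem inverse_mem_Hsub {m : ℕ} {x : H} (hx : x ∈ Hsub m) (hu : IsUnit x) :
    Ring.inverse x ∈ Hsub m :=
  (Hsub m).inverse_mem_of_isIntegral hx (.of_mem_of_fg _ (Hsub_fg m) x hx) hu

end HeckePaper

section HeckeResolvent

variable {K A : Type*} [Field K] [Ring A] [Algebra K A]

theorem sub_zpow_two_smul_mul_sub_zpow_neg_two_smul {q : K} (hq : q ≠ 0) (u : K) (y : A) :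
    (algebraMap K A u - q ^ (2 : ℤ) • y) * (algebraMap K A u - q ^ (-2 : ℤ) • y)
      = (algebraMap K A u - y) * (algebraMap K A u - y) - ((q - q⁻¹) ^ 2 * u) • y := by
  simp only [Algebra.algebraMap_eq_smul_one, sub_mul, mul_sub, smul_mul_assoc, mul_smul_comm,
    one_mul, mul_one]
  match_scalars <;> field_simp
  ring

theorem mul_mul_self_eq_of_sub_mul_eq_one {u : K} {y R : A} (hAR : (algebraMap K A u - y) * R = 1) :
    y * (R * R) = u • (R * R) - R := by
  rw [← sub_sub_cancel (algebraMap K A u) y, sub_mul, ← Algebra.smul_def, ← mul_assoc, hAR, one_mul]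

theorem resolvent_conj_identity {t u : K} {T y R : A} (hT : T * T = 1 + t • T)
    (hyY : Commute y (T * y * T)) (hAR : (algebraMap K A u - y) * R = 1)
    (hRA : R * (algebraMap K A u - y) = 1) :
    (algebraMap K A u - T * y * T) * ((T - t • 1) * R * (T - t • 1) + (t * u) • (R * T * R)
        - (t * t * u) • (R * R)) = 1 - (t * t * u) • (y * (R * R)) := by
  set Y := T * y * T
  set A' := algebraMap K A u - y
  set B := algebraMap K A u - Y
  have hAY : Commute A' Y := (Algebra.commute_algebraMap_left u Y).sub_left hyY
  have hRY : Commute R Y := Commute.units_inv_left (u := ⟨A', R, hAR, hRA⟩) hAY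
  have hRB : Commute R B := (Algebra.commute_algebraMap_left u R).symm.sub_right hRY
  have hTT' : T * (T - t • 1) = 1 := by
    rw [mul_sub, hT, mul_smul_comm, mul_one, add_sub_cancel_right]
  have hTA : T * A' = u • T - T * y := by
    rw [mul_sub, ← Algebra.commutes, ← Algebra.smul_def]
  have hBT' : B * (T - t • 1) = T * A' - (t * u) • 1 := by
    have hYT' : Y * (T - t • 1) = T * y := by rw [mul_assoc, hTT', mul_one]
    rw [sub_mul, hYT', ← Algebra.smul_def, hTA]
    module
  have hBT : B * T = T * A' - t • Y := by
    have hYT : Y * T = T * y + t • Y := by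
      rw [mul_assoc, hT, mul_add, mul_one, mul_smul_comm]
    rw [sub_mul, hYT, ← Algebra.smul_def, hTA]
    module
  have h1 : B * ((T - t • 1) * R * (T - t • 1)) = 1 - (t * u) • (R * T) + (t * t * u) • R := by
    rw [← mul_assoc, ← mul_assoc, hBT', sub_mul, sub_mul, mul_assoc T, hAR, mul_one, hTT',
      smul_mul_assoc, smul_mul_assoc, one_mul, mul_sub, mul_smul_comm, mul_one]
    module
  have h2 : B * (R * T * R) = R * T - t • (R * R * Y) := by
    calc B * (R * T * R) = R * (B * T) * R := by
          rw [← mul_assoc, ← mul_assoc, ← hRB.eq]; simp only [mul_assoc]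
      _ = R * T * (A' * R) - t • (R * (Y * R)) := by
          rw [hBT]; simp only [mul_sub, sub_mul, mul_smul_comm, smul_mul_assoc, mul_assoc]
      _ = R * T - t • (R * R * Y) := by rw [hAR, mul_one, ← hRY.eq, mul_assoc]
  have h3 : B * (R * R) = u • (R * R) - R * R * Y := by
    rw [← mul_assoc, ← hRB.eq, mul_assoc, ← hRB.eq, ← mul_assoc, mul_sub, ← Algebra.commutes,
      ← Algebra.smul_def]
  rw [mul_sub, mul_add, mul_smul_comm, mul_smul_comm, h1, h2, h3,
    mul_mul_self_eq_of_sub_mul_eq_one hAR]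
  module

theorem resolvent_mul_inverse_eq {q u : K} (hq : q ≠ 0) {T y R : A}
    (hT : T * T = 1 + (q - q⁻¹) • T) (hyY : Commute y (T * y * T))
    (hAR : (algebraMap K A u - y) * R = 1) (hRA : R * (algebraMap K A u - y) = 1)
    (hB : IsUnit (algebraMap K A u - T * y * T)) :
    (algebraMap K A u - q ^ (2 : ℤ) • y) * (algebraMap K A u - q ^ (-2 : ℤ) • y) * R ^ 2 *
        Ring.inverse (algebraMap K A u - T * y * T) =
      (T - (q - q⁻¹) • 1) * R * (T - (q - q⁻¹) • 1) + ((q - q⁻¹) * u) • (R * T * R)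
        - ((q - q⁻¹) * (q - q⁻¹) * u) • (R * R) := by
  set t := q - q⁻¹
  set B := algebraMap K A u - T * y * T with hBdef
  set X := (algebraMap K A u - q ^ (2 : ℤ) • y) * (algebraMap K A u - q ^ (-2 : ℤ) • y) * R ^ 2
    with hXdef
  have hX : X = 1 - (t * t * u) • (y * (R * R)) := by
    have hAARR : (algebraMap K A u - y) * ((algebraMap K A u - y) * (R * R)) = 1 := by
      rw [← mul_assoc _ R R, hAR, one_mul, hAR]
    rw [hXdef, sub_zpow_two_smul_mul_sub_zpow_neg_two_smul hq, pow_two R, sub_mul,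
      smul_mul_assoc, mul_assoc, hAARR, sq]
  have hRB : Commute R B := by
    have hAB : Commute (algebraMap K A u - y) B :=
      (Algebra.commute_algebraMap_left u B).sub_left
        ((Algebra.commute_algebraMap_left u y).symm.sub_right hyY)
    exact Commute.units_inv_left (u := ⟨_, R, hAR, hRA⟩) hAB
  have hXB : Commute X B := by
    have hyB : Commute y B := (Algebra.commute_algebraMap_left u y).symm.sub_right hyY
    rw [hX]
    exact (Commute.one_left B).sub_left ((hyB.mul_left (hRB.mul_left hRB)).smul_left _)
  have hXS : Commute X (Ring.inverse B) := by
    obtain ⟨v, hv⟩ := hB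
    rw [← hv, Ring.inverse_unit]
    exact Commute.units_inv_right (hv ▸ hXB)
  rw [hXS.eq, hX, ← resolvent_conj_identity hT hyY hAR hRA, ← hBdef, ← mul_assoc,
    Ring.inverse_mul_cancel _ hB, one_mul]

end HeckeResolvent

namespace HeckePaper

namespace IsCondExp

variable {Q : F} {tr : ℕ → H →ₗ[F] H} {m : ℕ}

theorem tr_mul_T_mul (htr : IsCondExp Q tr) (hm : 1 ≤ m) {X Y : H} (hX : X ∈ Hsub m)
    (hY : Y ∈ Hsub m) : tr (m + 1) (X * T m * Y) = X * Y := by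
  rw [htr.bimod (m + 1) (by omega) X hX Y hY (T m) (T_mem_Hsub hm (by omega)), htr.genOne m hm,
    mul_one]

theorem tr_Tinv_mul_mul_Tinv (htr : IsCondExp Q tr) (hm : 1 ≤ m) {X : H} (hX : X ∈ Hsub m) :
    tr (m + 1) (Tinv m * X * Tinv m) = tr m X - (q - q⁻¹) • (X - (q - q⁻¹) • Q • X) := by
  have hTX : tr (m + 1) (T m * X) = X := by
    simpa using htr.tr_mul_T_mul hm (one_mem _) hX
  have hsplit : Tinv m * X * Tinv m = Tinv m * X * T m - (q - q⁻¹) • (T m * X - (q - q⁻¹) • X) := by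
    simp only [Tinv, mul_sub, sub_mul, mul_smul_comm, smul_mul_assoc, mul_one, one_mul]
  rw [hsplit, map_sub, map_smul, map_sub, map_smul, htr.conj' m hm X hX, hTX,
    htr.scalar (m + 1) (by omega) X hX]

theorem tr_resolvent_expansion (htr : IsCondExp Q tr) (hm : 1 ≤ m) {R : H} (hR : R ∈ Hsub m)
    (u : F) :
    tr (m + 1) (Tinv m * R * Tinv m + ((q - q⁻¹) * u) • (R * T m * R)
        - ((q - q⁻¹) * (q - q⁻¹) * u) • (R * R)) =
      tr m R + ((q - q⁻¹) * (1 - Q * (q - q⁻¹))) • (u • (R * R) - R) := by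
  rw [map_sub, map_add, map_smul, map_smul, htr.tr_Tinv_mul_mul_Tinv hm hR,
    htr.tr_mul_T_mul hm hR hR, htr.scalar (m + 1) (by omega) _ (mul_mem hR hR)]
  generalize q - q⁻¹ = t
  simp only [smul_sub, smul_smul]
  ring_nf
  simp only [sub_smul]
  abel

end IsCondExp

theorem stmt13_general (Q₀ : ℂ) (tr : ℕ → H →ₗ[F] H) (htr : IsCondExp (RatFunc.C Q₀) tr)
    (m : ℕ) (hm : 1 ≤ m) (u : F)
    (h1 : IsUnit (cc u - y m)) (h2 : IsUnit (cc u - y (m + 1))) :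
    (cc u - q ^ (2 : ℤ) • y m) * (cc u - q ^ (-2 : ℤ) • y m) * (Ring.inverse (cc u - y m)) ^ 2 *
        tr (m + 1) (Ring.inverse (cc u - y (m + 1))) =
      tr m (Ring.inverse (cc u - y m)) +
        ((q - q⁻¹) * (1 - RatFunc.C Q₀ * (q - q⁻¹))) •
          (y m * (Ring.inverse (cc u - y m)) ^ 2) := by
  rw [show cc = algebraMap F H from rfl] at h1 h2 ⊢
  set R := Ring.inverse (algebraMap F H u - y m)
  have hR : R ∈ Hsub m := inverse_mem_Hsub (sub_mem (algebraMap_mem _ u) (y_mem_Hsub m)) h1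
  have hS : Ring.inverse (algebraMap F H u - y (m + 1)) ∈ Hsub (m + 1) :=
    inverse_mem_Hsub (sub_mem (algebraMap_mem _ u) (y_mem_Hsub (m + 1))) h2
  have hX : (algebraMap F H u - q ^ (2 : ℤ) • y m) * (algebraMap F H u - q ^ (-2 : ℤ) • y m) *
      R ^ 2 ∈ Hsub m := by
    have hy := y_mem_Hsub m
    refine mul_mem (mul_mem ?_ ?_) (pow_mem hR 2) <;>
      exact sub_mem (algebraMap_mem _ u) (Subalgebra.smul_mem _ hy _)
  have hAR : (algebraMap F H u - y m) * R = 1 := Ring.mul_inverse_cancel _ h1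
  have hRA : R * (algebraMap F H u - y m) = 1 := Ring.inverse_mul_cancel _ h1
  rw [← mul_one (_ * tr (m + 1) _), ← htr.bimod (m + 1) (by omega) _ hX 1 (one_mem _) _ hS, mul_one]
  rw [y_succ hm] at h2 ⊢
  have hyY : Commute (y m) (T m * y m * T m) := y_succ hm ▸ commute_y_y_succ m
  rw [resolvent_mul_inverse_eq RatFunc.X_ne_zero (T_mul_self m) hyY hAR hRA h2,
    ← show Tinv m = T m - (q - q⁻¹) • 1 from rfl, htr.tr_resolvent_expansion hm hR, pow_two,
    mul_mul_self_eq_of_sub_mul_eq_one hAR]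

/-- For any family of conditional expectations with parameter `Q ∈ ℂ`,
for `1 ≤ m ≤ n-1`, `t = q - q⁻¹`, and every scalar `u` with `u - y_m` and `u - y_{m+1}`
invertible,
`((u - q² y_m)(u - q⁻² y_m)/(u - y_m)²) Tr_{m+1}((u - y_{m+1})⁻¹)
   = Tr_m((u - y_m)⁻¹) + t(1 - Qt) y_m/(u - y_m)²`. -/
theorem stmt13 (Q₀ : ℂ) (tr : ℕ → H →ₗ[F] H) (htr : IsCondExp (RatFunc.C Q₀) tr)
    (n m : ℕ) (hm : 1 ≤ m) (hmn : m ≤ n - 1) (u : F)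
    (h1 : IsUnit (cc u - y m)) (h2 : IsUnit (cc u - y (m + 1))) :
    (cc u - q ^ (2 : ℤ) • y m) * (cc u - q ^ (-2 : ℤ) • y m) * (Ring.inverse (cc u - y m)) ^ 2 *
        tr (m + 1) (Ring.inverse (cc u - y (m + 1))) =
      tr m (Ring.inverse (cc u - y m)) +
        ((q - q⁻¹) * (1 - RatFunc.C Q₀ * (q - q⁻¹))) •
          (y m * (Ring.inverse (cc u - y m)) ^ 2) :=
  stmt13_general Q₀ tr htr m hm u h1 h2

end HeckePaper
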